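/- Let R be an algebraic curvature tensor on a 3-dimensional real inner product space E and let {v₁, v₂, v₃} be an orthonormal basis of E diagonalizing the Ricci form of R, i.e., Ric(v_i, v_j) = 0 for i ≠ j. Then for all i ≠ j, the curvature operator satisfies R(v_j, v_i)v_i = sec(v_i∧v_j)·v_j, where sec(v_i∧v_j) = R(v_i, v_j, v_j, v_i); in other words, each Jacobi operator J_{v_i} is diagonalized by the basis {v₁, v₂, v₃}, equivalently the bivectors {v_i ∧ v_j} diagonalize the curvature operator of R. -/
import Mathlib


open scoped RealInnerProductSpace

/-- An algebraic curvature tensor on a real inner product space `E`: a multilinear map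
`R : E × E × E × E → ℝ` with the symmetries of the Riemann curvature tensor.
For vectors `x y z`, the value `R x y z ·` represents the linear functional
`w ↦ ⟨R(x,y)z, w⟩` determined by the curvature operator `R(x,y)z`. -/
structure AlgCurvTensor (E : Type*) [NormedAddCommGroup E] [InnerProductSpace ℝ E] where
  R : E →ₗ[ℝ] E →ₗ[ℝ] E →ₗ[ℝ] E →ₗ[ℝ] ℝ
  antisym_fst : ∀ x y z w : E, R x y z w = - R y x z w
  antisym_snd : ∀ x y z w : E, R x y z w = - R x y w z
  pair_symm : ∀ x y z w : E, R x y z w = R z w x y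
  bianchi : ∀ x y z w : E, R x y z w + R y z x w + R z x y w = 0

/-- The Ricci form `Ric(x,y) = Σᵢ R(eᵢ, x, y, eᵢ)`, computed in the orthonormal basis `b`
(the result is independent of the choice of orthonormal basis). -/
noncomputable def AlgCurvTensor.ricci {E : Type*} [NormedAddCommGroup E]
    [InnerProductSpace ℝ E] (T : AlgCurvTensor E) (b : OrthonormalBasis (Fin 3) ℝ E)
    (x y : E) : ℝ :=
  ∑ i : Fin 3, T.R (b i) x y (b i)

/-- If an orthonormal basis `{v₁, v₂, v₃}` of a `3`-dimensional inner product space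
diagonalizes the Ricci form of `R`, then each Jacobi operator `J_{vᵢ}` is diagonalized by
this basis: `R(vⱼ, vᵢ)vᵢ = sec(vᵢ ∧ vⱼ) • vⱼ` for `i ≠ j` (expressed via inner products:
`⟨R(vⱼ,vᵢ)vᵢ, u⟩ = R vⱼ vᵢ vᵢ u = sec(vᵢ∧vⱼ) * ⟨vⱼ, u⟩` for all `u`). -/
theorem jacobi_diagonalized_of_ricci_diagonalized {E : Type*} [NormedAddCommGroup E]
    [InnerProductSpace ℝ E] (b : OrthonormalBasis (Fin 3) ℝ E) (T : AlgCurvTensor E)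
    (hdiag : ∀ i j : Fin 3, i ≠ j → T.ricci b (b i) (b j) = 0) :
    ∀ i j : Fin 3, i ≠ j → ∀ u : E,
      T.R (b j) (b i) (b i) u = T.R (b i) (b j) (b j) (b i) * ⟪b j, u⟫ := by
  intro i j hij u
  have htriple : ∀ i j k m : Fin 3, i ≠ j → k ≠ j → k ≠ i → m ≠ i → m = j ∨ m = k := by
    decide
  have hz1 : ∀ x z w : E, T.R x x z w = 0 := fun x z w => by
    have := T.antisym_fst x x z w; linarith
  have hz2 : ∀ x y z : E, T.R x y z z = 0 := fun x y z => by
    have := T.antisym_snd x y z z; linarith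
  have key : ∀ k : Fin 3, T.R (b j) (b i) (b i) (b k) =
      T.R (b i) (b j) (b j) (b i) * ⟪b j, b k⟫ := by
    intro k
    have hinner : ∀ k l : Fin 3, ⟪b k, b l⟫ = if k = l then (1:ℝ) else 0 :=
      orthonormal_iff_ite.mp b.orthonormal
    rcases eq_or_ne k j with rfl | hkj
    · rw [hinner, if_pos rfl, mul_one]
      have h1 := T.antisym_fst (b k) (b i) (b i) (b k)
      have h2 := T.antisym_snd (b i) (b k) (b i) (b k)
      linarith
    · rw [hinner, if_neg (Ne.symm hkj), mul_zero]
      rcases eq_or_ne k i with rfl | hki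
      · exact hz2 (b j) (b k) (b k)
      · have hric : T.ricci b (b k) (b j) = T.R (b i) (b k) (b j) (b i) := by
          rw [AlgCurvTensor.ricci]
          refine Finset.sum_eq_single i (fun m _ hmi => ?_)
            (fun h => absurd (Finset.mem_univ i) h)
          rcases htriple i j k m hij hkj hki hmi with rfl | rfl
          · exact hz2 (b m) (b k) (b m)
          · exact hz1 (b m) (b j) (b m)
        rw [T.pair_symm, ← hric, hdiag k j hkj]
  calc T.R (b j) (b i) (b i) u
      = ∑ k, ⟪b k, u⟫ * T.R (b j) (b i) (b i) (b k) := by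
        conv_lhs => rw [← b.sum_repr' u]
        simp [smul_eq_mul]
    _ = ∑ k, ⟪b k, u⟫ * (T.R (b i) (b j) (b j) (b i) * ⟪b j, b k⟫) := by
        exact Finset.sum_congr rfl fun k _ => by rw [key k]
    _ = T.R (b i) (b j) (b j) (b i) * ⟪b j, u⟫ := by
        have hinner : ∀ k l : Fin 3, ⟪b k, b l⟫ = if k = l then (1:ℝ) else 0 :=
          orthonormal_iff_ite.mp b.orthonormal
        simp only [hinner, mul_ite, mul_one, mul_zero]
        rw [Finset.sum_ite_eq]
        simp [mul_comm]
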